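/- Let {P_θ} be a one-parameter exponential family with sufficient statistic T and log-partition A, and define Ψ̇_θ(t, θ) = E_θ[1{T(X) ≥ t}(T(X) − A'(θ))]. Then (t, θ) ↦ Ψ̇_θ(t, θ) is continuous at (t0, θ0) where t0 = E_{θ0}[T(X)] = A'(θ0), and Ψ̇_θ(t0, θ0) = (1/2) E_{θ0}[|T(X) − t0|]. -/

import Mathlib

open MeasureTheory

/-- Log-partition function `A(θ) = log ∫ e^{θ T(x)} dμ(x)` of a one-parameter
exponential family. -/
noncomputable def logPart {X : Type*} [MeasurableSpace X]
    (μ : Measure X) (T : X → ℝ) (θ : ℝ) : ℝ :=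
  Real.log (∫ x, Real.exp (θ * T x) ∂μ)

/-- The exponential family measure `P_θ` with density `exp(θ T(x) - A(θ))` w.r.t. `μ`. -/
noncomputable def expFam {X : Type*} [MeasurableSpace X]
    (μ : Measure X) (T : X → ℝ) (θ : ℝ) : Measure X :=
  μ.withDensity fun x => ENNReal.ofReal (Real.exp (θ * T x - logPart μ T θ))

/-- `Ψ̇_θ(t, θ) = E_θ[1{T(X) ≥ t}(T(X) - A'(θ))]`, using `A'(θ) = E_θ[T(X)]`. -/
noncomputable def psiDot {X : Type*} [MeasurableSpace X]
    (μ : Measure X) (T : X → ℝ) (t θ : ℝ) : ℝ :=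
  ∫ x, (if t ≤ T x then T x - ∫ y, T y ∂(expFam μ T θ) else 0) ∂(expFam μ T θ)

open Filter Topology Set Real

/-! Writing `m(θ) = E_θ T`, the pointwise identity
`1{T ≥ t}(T - m) = (T - t)₊ + 1{T ≥ t}(t - m)` gives
`Ψ̇(t, θ) = E_θ (T - t)₊ + (t - m(θ)) P_θ(T ≥ t)`.
Near `θ₀`, `E_θ g` with `|g| ≤ C + |T|` is a ratio of two `μ`-integrals whose integrands are
dominated by `(C + |T|)(e^{aT} + e^{bT})` for some `a < θ₀ < b`, so dominated convergence makes
`θ ↦ m(θ)` and `(t, θ) ↦ E_θ (T - t)₊` continuous; the second term is bounded by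
`|t - m(θ)| → 0`. At `(t₀, θ₀)` it vanishes, and
`E(T - t₀)₊ = E|T - t₀| / 2` because `T - t₀` is centred. -/

theorem exp_mul_le_exp_mul_add_exp_mul {a b θ u : ℝ} (ha : a ≤ θ) (hb : θ ≤ b) :
    exp (θ * u) ≤ exp (a * u) + exp (b * u) := by
  rcases le_total 0 u with hu | hu
  · calc exp (θ * u) ≤ exp (b * u) := exp_le_exp.2 (by nlinarith)
      _ ≤ _ := le_add_of_nonneg_left (exp_pos _).le
  · calc exp (θ * u) ≤ exp (a * u) := exp_le_exp.2 (by nlinarith)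
      _ ≤ _ := le_add_of_nonneg_right (exp_pos _).le

theorem abs_mul_exp_mul_le {δ θ u : ℝ} (hδ : 0 < δ) :
    |u| * exp (θ * u) ≤ δ⁻¹ * (exp ((θ - δ) * u) + exp ((θ + δ) * u)) := by
  have hexp_abs : exp (|u| * δ) ≤ exp (-u * δ) + exp (u * δ) := by
    rcases abs_cases u with ⟨h, -⟩ | ⟨h, -⟩ <;> rw [h]
    · exact le_add_of_nonneg_left (exp_pos _).le
    · exact le_add_of_nonneg_right (exp_pos _).le
  have hlin : δ * |u| ≤ exp (-u * δ) + exp (u * δ) := by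
    linarith [add_one_le_exp (|u| * δ)]
  calc |u| * exp (θ * u) = δ⁻¹ * (δ * |u| * exp (θ * u)) := by field_simp
    _ ≤ δ⁻¹ * ((exp (-u * δ) + exp (u * δ)) * exp (θ * u)) := by gcongr
    _ = δ⁻¹ * (exp ((θ - δ) * u) + exp ((θ + δ) * u)) := by
      rw [add_mul, ← exp_add, ← exp_add]; ring_nf

theorem integral_abs_sub_integral_eq_two_mul {Ω : Type*} [MeasurableSpace Ω] {ν : Measure Ω}
    [IsProbabilityMeasure ν] {f : Ω → ℝ} (hf : Integrable f ν) :
    ∫ x, |f x - ∫ y, f y ∂ν| ∂ν = 2 * ∫ x, max (f x - ∫ y, f y ∂ν) 0 ∂ν := by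
  set c := ∫ y, f y ∂ν
  have hfc : Integrable (fun x => f x - c) ν := hf.sub (integrable_const c)
  have hcentered : ∫ x, (f x - c) ∂ν = 0 := by
    rw [integral_sub hf (integrable_const c), integral_const, probReal_univ, one_smul, sub_self]
  calc ∫ x, |f x - c| ∂ν = ∫ x, (2 * max (f x - c) 0 - (f x - c)) ∂ν := by
        congr 1 with x
        rcases le_total 0 (f x - c) with h | h
        · rw [abs_of_nonneg h, max_eq_left h]; ring
        · rw [abs_of_nonpos h, max_eq_right h]; ring
    _ = 2 * ∫ x, max (f x - c) 0 ∂ν := by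
      rw [integral_sub (hfc.pos_part.const_mul 2) hfc, integral_const_mul, hcentered, sub_zero]

theorem abs_max_sub_zero_le (u t : ℝ) : |max (u - t) 0| ≤ |t| + |u| := by
  rw [abs_of_nonneg (le_max_right _ _)]
  exact max_le (by linarith [le_abs_self u, neg_abs_le t]) (by positivity)

section ExpFam

variable {X : Type*} [MeasurableSpace X] {μ : Measure X} {T : X → ℝ}

theorem integrable_abs_mul_exp_mul (hT : Measurable T) {θ : ℝ}
    (hθ : ∀ᶠ θ' in 𝓝 θ, Integrable (fun x => exp (θ' * T x)) μ) :
    Integrable (fun x => |T x| * exp (θ * T x)) μ := by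
  obtain ⟨δ, hδ, hball⟩ := Metric.eventually_nhds_iff.1 hθ
  have hδ2 : 0 < δ / 2 := half_pos hδ
  have hsub : dist (θ - δ / 2) θ < δ := by
    rw [Real.dist_eq, sub_sub_cancel_left, abs_neg, abs_of_pos hδ2]; linarith
  have hadd : dist (θ + δ / 2) θ < δ := by
    rw [Real.dist_eq, add_sub_cancel_left, abs_of_pos hδ2]; linarith
  refine Integrable.mono' (((hball hsub).add (hball hadd)).const_mul (δ / 2)⁻¹)
    (by fun_prop) (ae_of_all _ fun x => ?_)
  rw [norm_of_nonneg (by positivity)]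
  exact abs_mul_exp_mul_le hδ2

theorem tendsto_integral_exp_mul_mul (hT : Measurable T) {ι : Type*} {l : Filter ι}
    [l.IsCountablyGenerated] {θ : ι → ℝ} {θ0 : ℝ} (hθ : Tendsto θ l (𝓝 θ0))
    (hint : ∀ᶠ θ in 𝓝 θ0, Integrable (fun x => exp (θ * T x)) μ)
    {g : ι → X → ℝ} {g0 : X → ℝ} (C : ℝ) (hg_meas : ∀ᶠ i in l, AEStronglyMeasurable (g i) μ)
    (hg_bound : ∀ᶠ i in l, ∀ x, |g i x| ≤ C + |T x|)
    (hg_lim : ∀ x, Tendsto (fun i => g i x) l (𝓝 (g0 x))) :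
    Tendsto (fun i => ∫ x, exp (θ i * T x) * g i x ∂μ) l
      (𝓝 (∫ x, exp (θ0 * T x) * g0 x ∂μ)) := by
  obtain ⟨a, b, ⟨ha0, hb0⟩, hab_nhds, hab⟩ :=
    exists_Icc_mem_subset_of_mem_nhds hint.eventually_nhds
  have ha := hab (left_mem_Icc.2 (ha0.trans hb0))
  have hb := hab (right_mem_Icc.2 (ha0.trans hb0))
  refine tendsto_integral_filter_of_dominated_convergence
    (fun x => (C + |T x|) * (exp (a * T x) + exp (b * T x))) ?_ ?_ ?_ ?_
  · filter_upwards [hg_meas] with i hi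
    exact ((hT.const_mul _).exp.aestronglyMeasurable).mul hi
  · filter_upwards [hg_bound, hθ hab_nhds] with i hi hθi
    refine ae_of_all _ fun x => ?_
    rw [norm_mul, norm_of_nonneg (exp_pos _).le, Real.norm_eq_abs, mul_comm]
    exact mul_le_mul (hi x) (exp_mul_le_exp_mul_add_exp_mul hθi.1 hθi.2) (exp_pos _).le
      ((abs_nonneg _).trans (hi x))
  · exact (((ha.self_of_nhds.add hb.self_of_nhds).const_mul C).add
      ((integrable_abs_mul_exp_mul hT ha).add (integrable_abs_mul_exp_mul hT hb))).congr
      (ae_of_all _ fun x => by simp only [Pi.add_apply]; ring)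
  · exact ae_of_all _ fun x =>
      ((continuous_exp.tendsto _).comp (hθ.mul_const (T x))).mul (hg_lim x)

theorem integral_exp_mul_pos (hμ : μ ≠ 0) {θ : ℝ}
    (hθ : Integrable (fun x => exp (θ * T x)) μ) : 0 < ∫ x, exp (θ * T x) ∂μ :=
  haveI : NeZero μ := ⟨hμ⟩
  integral_exp_pos hθ

theorem integral_expFam (hT : Measurable T) {θ : ℝ} (hZ : 0 < ∫ x, exp (θ * T x) ∂μ)
    (g : X → ℝ) :
    ∫ x, g x ∂expFam μ T θ = (∫ x, exp (θ * T x) ∂μ)⁻¹ * ∫ x, exp (θ * T x) * g x ∂μ := by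
  rw [expFam, integral_withDensity_eq_integral_toReal_smul (by fun_prop)
    (ae_of_all _ fun _ => ENNReal.ofReal_lt_top), ← integral_const_mul]
  congr 1 with x
  rw [ENNReal.toReal_ofReal (exp_pos _).le, smul_eq_mul, exp_sub, logPart, exp_log hZ]
  ring

theorem integrable_expFam_iff (hT : Measurable T) {θ : ℝ} {g : X → ℝ} :
    Integrable g (expFam μ T θ) ↔ Integrable (fun x => exp (θ * T x) * g x) μ := by
  rw [expFam, integrable_withDensity_iff_integrable_smul' (by fun_prop)
    (ae_of_all _ fun _ => ENNReal.ofReal_lt_top),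
    ← integrable_mul_const_iff (exp_pos (logPart μ T θ)).ne'.isUnit]
  refine integrable_congr (ae_of_all _ fun x => ?_)
  dsimp only
  rw [ENNReal.toReal_ofReal (exp_pos _).le, smul_eq_mul, exp_sub]
  field_simp

theorem isProbabilityMeasure_expFam (hT : Measurable T) {θ : ℝ}
    (hZ : 0 < ∫ x, exp (θ * T x) ∂μ) : IsProbabilityMeasure (expFam μ T θ) := by
  have h := integral_expFam hT hZ (fun _ => 1)
  simp only [integral_const, smul_eq_mul, mul_one, inv_mul_cancel₀ hZ.ne'] at h
  exact ⟨(ENNReal.toReal_eq_one_iff _).1 h⟩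

theorem integrable_expFam_of_abs_le (hT : Measurable T) {θ : ℝ}
    (hθ : ∀ᶠ θ' in 𝓝 θ, Integrable (fun x => exp (θ' * T x)) μ) {f : X → ℝ}
    (hf : Measurable f) (C : ℝ) (hbound : ∀ x, |f x| ≤ C + |T x|) :
    Integrable f (expFam μ T θ) := by
  rw [integrable_expFam_iff hT]
  refine Integrable.mono' ((hθ.self_of_nhds.const_mul C).add (integrable_abs_mul_exp_mul hT hθ))
    (by fun_prop) (ae_of_all _ fun x => ?_)
  rw [norm_mul, norm_of_nonneg (exp_pos _).le, Real.norm_eq_abs, mul_comm]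
  calc |f x| * exp (θ * T x) ≤ (C + |T x|) * exp (θ * T x) :=
        mul_le_mul_of_nonneg_right (hbound x) (exp_pos _).le
    _ = C * exp (θ * T x) + |T x| * exp (θ * T x) := add_mul _ _ _

theorem tendsto_integral_expFam (hT : Measurable T) (hμ : μ ≠ 0) {ι : Type*} {l : Filter ι}
    [l.IsCountablyGenerated] {θ : ι → ℝ} {θ0 : ℝ} (hθ : Tendsto θ l (𝓝 θ0))
    (hint : ∀ᶠ θ in 𝓝 θ0, Integrable (fun x => exp (θ * T x)) μ)
    {g : ι → X → ℝ} {g0 : X → ℝ} (C : ℝ) (hg_meas : ∀ᶠ i in l, AEStronglyMeasurable (g i) μ)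
    (hg_bound : ∀ᶠ i in l, ∀ x, |g i x| ≤ C + |T x|)
    (hg_lim : ∀ x, Tendsto (fun i => g i x) l (𝓝 (g0 x))) :
    Tendsto (fun i => ∫ x, g i x ∂expFam μ T (θ i)) l (𝓝 (∫ x, g0 x ∂expFam μ T θ0)) := by
  have hZ := tendsto_integral_exp_mul_mul hT hθ hint (g := fun _ _ => 1) (g0 := fun _ => 1) 1
    (.of_forall fun _ => aestronglyMeasurable_const)
    (.of_forall fun _ x => by simp) (fun _ => tendsto_const_nhds)
  simp only [mul_one] at hZ
  have hZ0 := integral_exp_mul_pos hμ hint.self_of_nhds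
  rw [integral_expFam hT hZ0]
  refine ((hZ.inv₀ hZ0.ne').mul
    (tendsto_integral_exp_mul_mul hT hθ hint C hg_meas hg_bound hg_lim)).congr' ?_
  filter_upwards [hθ.eventually hint] with i hi
  rw [integral_expFam hT (integral_exp_mul_pos hμ hi)]

theorem psiDot_eq (hT : Measurable T) (hμ : μ ≠ 0) {θ : ℝ}
    (hθ : ∀ᶠ θ' in 𝓝 θ, Integrable (fun x => exp (θ' * T x)) μ) (t : ℝ) :
    psiDot μ T t θ = ∫ x, max (T x - t) 0 ∂expFam μ T θ +
      (t - ∫ x, T x ∂expFam μ T θ) * (expFam μ T θ).real {x | t ≤ T x} := by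
  have := isProbabilityMeasure_expFam hT (integral_exp_mul_pos hμ hθ.self_of_nhds)
  have hs : MeasurableSet {x | t ≤ T x} := measurableSet_le measurable_const hT
  have hposPart : Integrable (fun x => max (T x - t) 0) (expFam μ T θ) :=
    integrable_expFam_of_abs_le hT hθ (by fun_prop) |t| fun x => abs_max_sub_zero_le (T x) t
  have hind : Integrable (fun x => (t - ∫ x, T x ∂expFam μ T θ) * {x | t ≤ T x}.indicator 1 x)
      (expFam μ T θ) :=
    ((integrable_const 1).indicator hs).const_mul _
  rw [psiDot, ← integral_indicator_one hs, ← integral_const_mul, ← integral_add hposPart hind]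
  congr 1 with x
  by_cases h : t ≤ T x
  · simp only [h, if_true, Set.indicator_apply, mem_ofPred_eq, Pi.one_apply,
      max_eq_left (sub_nonneg.2 h)]
    ring
  · simp only [h, if_false, Set.indicator_apply, mem_ofPred_eq,
      max_eq_right (sub_nonpos.2 (not_le.1 h).le)]
    ring

theorem tendsto_integral_expFam_self (hT : Measurable T) (hμ : μ ≠ 0) {θ0 : ℝ}
    (hint : ∀ᶠ θ in 𝓝 θ0, Integrable (fun x => exp (θ * T x)) μ) :
    Tendsto (fun θ => ∫ x, T x ∂expFam μ T θ) (𝓝 θ0) (𝓝 (∫ x, T x ∂expFam μ T θ0)) :=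
  tendsto_integral_expFam hT hμ tendsto_id hint (g := fun _ => T) 0
    (.of_forall fun _ => hT.aestronglyMeasurable) (.of_forall fun _ x => by simp)
    (fun _ => tendsto_const_nhds)

theorem tendsto_integral_max_sub_expFam (hT : Measurable T) (hμ : μ ≠ 0) {t0 θ0 : ℝ}
    (hint : ∀ᶠ θ in 𝓝 θ0, Integrable (fun x => exp (θ * T x)) μ) :
    Tendsto (fun p : ℝ × ℝ => ∫ x, max (T x - p.1) 0 ∂expFam μ T p.2)
      (𝓝 (t0, θ0)) (𝓝 (∫ x, max (T x - t0) 0 ∂expFam μ T θ0)) := by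
  have hfst : Tendsto Prod.fst (𝓝 (t0, θ0)) (𝓝 t0) := continuous_fst.tendsto _
  refine tendsto_integral_expFam hT hμ (continuous_snd.tendsto _) hint (|t0| + 1)
    (.of_forall fun p => ((hT.sub_const p.1).max measurable_const).aestronglyMeasurable) ?_
    fun x => (tendsto_const_nhds.sub hfst).max tendsto_const_nhds
  filter_upwards [hfst.eventually (eventually_abs_sub_lt t0 one_pos)] with p hp x
  linarith [abs_max_sub_zero_le (T x) p.1, abs_sub_abs_le_abs_sub p.1 t0]

theorem tendsto_sub_integral_mul_measureReal_expFam (hT : Measurable T) (hμ : μ ≠ 0)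
    {θ0 : ℝ} (hint : ∀ᶠ θ in 𝓝 θ0, Integrable (fun x => exp (θ * T x)) μ) :
    Tendsto (fun p : ℝ × ℝ =>
      (p.1 - ∫ x, T x ∂expFam μ T p.2) * (expFam μ T p.2).real {x | p.1 ≤ T x})
      (𝓝 (∫ x, T x ∂expFam μ T θ0, θ0)) (𝓝 0) := by
  have hsnd : Tendsto Prod.snd (𝓝 (∫ x, T x ∂expFam μ T θ0, θ0)) (𝓝 θ0) :=
    continuous_snd.tendsto _
  have hdiff := (continuous_fst.tendsto _).sub ((tendsto_integral_expFam_self hT hμ hint).comp hsnd)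
  rw [sub_self] at hdiff
  refine squeeze_zero_norm' ?_ (by simpa using hdiff.norm)
  filter_upwards [hsnd.eventually hint.eventually_nhds] with p hp
  have := isProbabilityMeasure_expFam hT (integral_exp_mul_pos hμ hp.self_of_nhds)
  rw [norm_mul, norm_of_nonneg measureReal_nonneg]
  exact mul_le_of_le_one_right (norm_nonneg _) measureReal_le_one

end ExpFam

/-- Continuity of `Ψ̇_θ` at `(t₀, θ₀)` where `t₀ = E_{θ₀}[T(X)] = A'(θ₀)`, together with the
identity `Ψ̇_θ(t₀, θ₀) = (1/2) E_{θ₀}[|T(X) - t₀|]`. -/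
theorem statement15 {X : Type*} [MeasurableSpace X]
    (μ : Measure X) (hμ : μ ≠ 0) (T : X → ℝ) (hT : Measurable T) (θ0 : ℝ)
    (hnbhd : ∃ ε > 0, ∀ θ : ℝ, |θ - θ0| < ε →
      Integrable (fun x => Real.exp (θ * T x)) μ)
    (t0 : ℝ) (ht0 : t0 = ∫ x, T x ∂(expFam μ T θ0)) :
    ContinuousAt (fun p : ℝ × ℝ => psiDot μ T p.1 p.2) (t0, θ0) ∧
      psiDot μ T t0 θ0 = (1 / 2) * ∫ x, |T x - t0| ∂(expFam μ T θ0) := by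
  subst ht0
  have hint : ∀ᶠ θ in 𝓝 θ0, Integrable (fun x => exp (θ * T x)) μ := by
    obtain ⟨ε, hε, h⟩ := hnbhd
    exact Metric.eventually_nhds_iff.2 ⟨ε, hε, fun θ hθ => h θ (by rwa [← Real.dist_eq])⟩
  have hcenter : psiDot μ T (∫ x, T x ∂expFam μ T θ0) θ0 =
      ∫ x, max (T x - ∫ y, T y ∂expFam μ T θ0) 0 ∂expFam μ T θ0 := by
    rw [psiDot_eq hT hμ hint, sub_self, zero_mul, add_zero]
  refine ⟨?_, ?_⟩
  · have hlim := (tendsto_integral_max_sub_expFam hT hμ hint).add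
      (tendsto_sub_integral_mul_measureReal_expFam hT hμ hint)
    rw [add_zero, ← hcenter] at hlim
    refine hlim.congr' ?_
    filter_upwards [(continuous_snd.tendsto _).eventually hint.eventually_nhds] with p hp
    exact (psiDot_eq hT hμ hp p.1).symm
  · have := isProbabilityMeasure_expFam hT (integral_exp_mul_pos hμ hint.self_of_nhds)
    rw [hcenter, integral_abs_sub_integral_eq_two_mul
      (integrable_expFam_of_abs_le hT hint hT 0 fun x => by simp)]
    ring
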